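/- (Multilevel cost bound, case η=0, γ=0, β=1, α=1.) Let H > 1, T > 0, c₁,…,c₄ > 0, ε ∈ (0, e^{−1}), L = ⌈log(√32 c₁ T ε^{−1})/log H⌉, h_l = H^{−l}T, K_l = ⌈32 ε^{−2} c₂²(L+1)²⌉, M_l = ⌈32 ε^{−2} c₃² h_l (L+1)²⌉. Then the total cost ∑_{l=0}^{L} c₄ h_l^{−1} M_l K_l is bounded by c₅ ε^{−4} |log ε|^5 for a constant c₅ depending only on H, T, c₁,…,c₄. -/

import Mathlib

/-! Put `E = |log ε| ≥ 1`. Since `L = ⌈log_H (√32 c₁ T / ε)⌉`, there are `L + 1 = O(E)` levels and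
`h_l⁻¹ ≤ H^L / T = O(ε⁻¹)`. On each level `h_l⁻¹ M_l ≤ 32 ε⁻² c₃² (L+1)² + h_l⁻¹` and
`K_l ≤ 32 ε⁻² c₂² (L+1)² + 1`, both `O(ε⁻² E²)`, so a level costs `O(ε⁻⁴ E⁴)` and the total is
`O(ε⁻⁴ E⁵)`. -/

open Real Finset

lemma one_le_abs_log_of_lt_exp_neg_one {ε : ℝ} (hε : 0 < ε) (hε' : ε < exp (-1)) :
    1 ≤ |log ε| := by
  have : log ε < -1 := by simpa using log_lt_log hε hε'
  rw [abs_of_neg (by linarith)]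
  linarith

lemma one_le_inv_of_lt_exp_neg_one {ε : ℝ} (hε : 0 < ε) (hε' : ε < exp (-1)) : 1 ≤ ε⁻¹ :=
  one_le_inv₀ hε |>.mpr (hε'.trans (exp_lt_one_iff.mpr (by norm_num))).le

lemma abs_intCeil_le (x : ℝ) : |(⌈x⌉ : ℝ)| ≤ |x| + 1 := by
  rw [abs_le]
  constructor
  · linarith [neg_abs_le x, Int.le_ceil x]
  · linarith [le_abs_self x, Int.ceil_lt_add_one x]

lemma natCast_toNat_le_abs (z : ℤ) : (z.toNat : ℝ) ≤ |(z : ℝ)| := by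
  rcases le_total 0 z with hz | hz
  · rw [← Int.cast_natCast, Int.toNat_of_nonneg hz]
    exact le_abs_self _
  · simp [Int.toNat_of_nonpos hz]

lemma abs_logb_mul_inv_le {b s ε : ℝ} (hb : 1 < b) (hs : s ≠ 0) (hε : ε ≠ 0)
    (hE : 1 ≤ |log ε|) : |logb b (s * ε⁻¹)| ≤ (|log s| + 1) / log b * |log ε| := by
  have hlogb : 0 < log b := log_pos hb
  rw [logb, log_mul hs (inv_ne_zero hε), log_inv, abs_div, abs_of_pos hlogb, div_mul_eq_mul_div]
  gcongr
  calc |log s + -log ε| ≤ |log s| + |log ε| := by simpa using abs_add_le (log s) (-log ε)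
    _ ≤ (|log s| + 1) * |log ε| := by nlinarith [abs_nonneg (log s)]

lemma pow_toNat_ceil_logb_le {b y : ℝ} (hb : 1 < b) (hy : 0 < y) :
    b ^ (⌈logb b y⌉.toNat) ≤ 1 + b * y := by
  have hb0 : 0 < b := by linarith
  rcases le_total ⌈logb b y⌉ 0 with hn | hn
  · simp [Int.toNat_of_nonpos hn]
    positivity
  · have hcast : ((⌈logb b y⌉.toNat : ℕ) : ℝ) = ⌈logb b y⌉ := by
      rw [← Int.cast_natCast, Int.toNat_of_nonneg hn]
    calc b ^ (⌈logb b y⌉.toNat) = b ^ ((⌈logb b y⌉.toNat : ℕ) : ℝ) := (rpow_natCast _ _).symm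
      _ ≤ b ^ (logb b y + 1) := by
          rw [hcast]
          exact rpow_le_rpow_of_exponent_le hb.le (Int.ceil_lt_add_one _).le
      _ = y * b := by rw [rpow_add hb0, rpow_logb hb0 hb.ne' hy, rpow_one]
      _ ≤ 1 + b * y := by linarith

lemma inv_rpow_neg_mul_le {H T s ε : ℝ} {l : ℕ} (hH : 1 < H) (hT : 0 < T) (hs : 0 < s)
    (hu : 1 ≤ ε⁻¹) (hl : l ≤ ⌈logb H (s * ε⁻¹)⌉.toNat) :
    (H ^ (-(l : ℝ)) * T)⁻¹ ≤ (1 + H * s) / T * ε⁻¹ :=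
  calc (H ^ (-(l : ℝ)) * T)⁻¹ = H ^ l * T⁻¹ := by
        rw [rpow_neg (by linarith), rpow_natCast, mul_inv, inv_inv]
    _ ≤ (1 + H * (s * ε⁻¹)) * T⁻¹ := by
        gcongr
        exact (pow_le_pow_right₀ hH.le hl).trans (pow_toNat_ceil_logb_le hH (by positivity))
    _ ≤ (1 + H * s) / T * ε⁻¹ := by
        rw [div_mul_eq_mul_div, div_eq_mul_inv]
        gcongr
        nlinarith [mul_pos (by linarith : (0:ℝ) < H) hs]

lemma inv_mul_natCeil_mul_le {a h : ℝ} (ha : 0 ≤ a) (hh : 0 < h) :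
    h⁻¹ * ⌈a * h⌉₊ ≤ a + h⁻¹ := by
  calc h⁻¹ * ⌈a * h⌉₊ ≤ h⁻¹ * (a * h + 1) := by
        gcongr
        exact (Nat.ceil_lt_add_one (by positivity)).le
    _ = a + h⁻¹ := by field_simp

lemma level_cost_le {a b c h : ℝ} (ha : 0 ≤ a) (hb : 0 ≤ b) (hc : 0 ≤ c) (hh : 0 < h) :
    c * h⁻¹ * ⌈a * h⌉₊ * ⌈b⌉₊ ≤ c * (a + h⁻¹) * (b + 1) := by
  rw [mul_assoc c]
  gcongr
  · exact inv_mul_natCeil_mul_le ha hh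
  · exact (Nat.ceil_lt_add_one hb).le

lemma total_cost_le {c₂ c₃ c₄ C D E u n r : ℝ} (hc₄ : 0 ≤ c₄) (hD : 0 ≤ D) (hE : 1 ≤ E)
    (hu : 1 ≤ u) (hn0 : 0 ≤ n) (hn : n ≤ C * E) (hr0 : 0 ≤ r) (hr : r ≤ (C * E) ^ 2) :
    n * (c₄ * (32 * u ^ 2 * c₃ ^ 2 * r + D * u) * (32 * u ^ 2 * c₂ ^ 2 * r + 1))
      ≤ C * c₄ * (32 * c₃ ^ 2 * C ^ 2 + D) * (32 * c₂ ^ 2 * C ^ 2 + 1) * u ^ 4 * E ^ 5 := by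
  have huE : 1 ≤ u ^ 2 * E ^ 2 := one_le_mul_of_one_le_of_one_le (one_le_pow₀ hu) (one_le_pow₀ hE)
  have hM : 32 * u ^ 2 * c₃ ^ 2 * r + D * u ≤ (32 * c₃ ^ 2 * C ^ 2 + D) * (u ^ 2 * E ^ 2) := by
    have : u ≤ u ^ 2 * E ^ 2 :=
      (le_self_pow₀ hu two_ne_zero).trans (le_mul_of_one_le_right (by positivity) (one_le_pow₀ hE))
    calc 32 * u ^ 2 * c₃ ^ 2 * r + D * u
        ≤ 32 * u ^ 2 * c₃ ^ 2 * (C * E) ^ 2 + D * (u ^ 2 * E ^ 2) := by gcongr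
      _ = _ := by ring
  have hK : 32 * u ^ 2 * c₂ ^ 2 * r + 1 ≤ (32 * c₂ ^ 2 * C ^ 2 + 1) * (u ^ 2 * E ^ 2) :=
    calc 32 * u ^ 2 * c₂ ^ 2 * r + 1 ≤ 32 * u ^ 2 * c₂ ^ 2 * (C * E) ^ 2 + u ^ 2 * E ^ 2 := by
          gcongr
      _ = _ := by ring
  calc n * (c₄ * (32 * u ^ 2 * c₃ ^ 2 * r + D * u) * (32 * u ^ 2 * c₂ ^ 2 * r + 1))
      ≤ (C * E) * (c₄ * ((32 * c₃ ^ 2 * C ^ 2 + D) * (u ^ 2 * E ^ 2))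
          * ((32 * c₂ ^ 2 * C ^ 2 + 1) * (u ^ 2 * E ^ 2))) := by
        have : 0 ≤ C * E := hn0.trans hn
        gcongr
    _ = _ := by ring

theorem multilevel_cost_bound_eta0_gamma0_beta1_alpha1_general
    (H T c₁ c₂ c₃ c₄ : ℝ) (hH : 1 < H) (hT : 0 < T)
    (hc₁ : 0 < c₁) (hc₄ : 0 < c₄) :
    ∃ c₅ > 0, ∀ ε : ℝ, 0 < ε → ε < Real.exp (-1) →
      ∑ l ∈ Finset.range
          ((⌈Real.log (Real.sqrt 32 * c₁ * T * ε⁻¹) / Real.log H⌉ : ℤ).toNat + 1),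
        c₄ * (H ^ (-(l : ℝ)) * T)⁻¹ *
          ((⌈32 * ε ^ (-(2 : ℝ)) * c₃ ^ 2 * (H ^ (-(l : ℝ)) * T) *
              (((⌈Real.log (Real.sqrt 32 * c₁ * T * ε⁻¹) / Real.log H⌉ : ℤ) : ℝ) + 1) ^ 2⌉₊ : ℝ)) *
          ((⌈32 * ε ^ (-(2 : ℝ)) * c₂ ^ 2 *
              (((⌈Real.log (Real.sqrt 32 * c₁ * T * ε⁻¹) / Real.log H⌉ : ℤ) : ℝ) + 1) ^ 2⌉₊ : ℝ))
        ≤ c₅ * ε ^ (-(4 : ℝ)) * |Real.log ε| ^ 5 := by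
  set s := √32 * c₁ * T
  have hs : 0 < s := by positivity
  set C := (|log s| + 1) / log H + 2
  set D := (1 + H * s) / T
  have hlogH : 0 < log H := log_pos hH
  refine ⟨C * c₄ * (32 * c₃ ^ 2 * C ^ 2 + D) * (32 * c₂ ^ 2 * C ^ 2 + 1), by positivity,
    fun ε hε hε' => ?_⟩
  have hE := one_le_abs_log_of_lt_exp_neg_one hε hε'
  have hu := one_le_inv_of_lt_exp_neg_one hε hε'
  have hε2 : ε ^ (-(2 : ℝ)) = ε⁻¹ ^ 2 := by rw [rpow_neg hε.le, inv_pow]; norm_cast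
  have hε4 : ε ^ (-(4 : ℝ)) = ε⁻¹ ^ 4 := by rw [rpow_neg hε.le, inv_pow]; norm_cast
  simp only [log_div_log, hε2, hε4]
  set L := ⌈logb H (s * ε⁻¹)⌉
  have hLC : |(L : ℝ)| + 1 ≤ C * |log ε| := by
    have := abs_logb_mul_inv_le hH hs.ne' hε.ne' hE
    linarith [abs_intCeil_le (logb H (s * ε⁻¹))]
  calc _ ≤ ∑ l ∈ range (L.toNat + 1), c₄ * (32 * ε⁻¹ ^ 2 * c₃ ^ 2 * ((L : ℝ) + 1) ^ 2 + D * ε⁻¹)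
          * (32 * ε⁻¹ ^ 2 * c₂ ^ 2 * ((L : ℝ) + 1) ^ 2 + 1) := by
        refine sum_le_sum fun l hl => ?_
        rw [mul_right_comm (32 * ε⁻¹ ^ 2 * c₃ ^ 2)]
        refine (level_cost_le (by positivity) (by positivity) hc₄.le (by positivity)).trans ?_
        gcongr
        exact inv_rpow_neg_mul_le hH hT hs hu (Nat.lt_succ_iff.mp (mem_range.mp hl))
    _ = ((L.toNat : ℝ) + 1) * (c₄ * (32 * ε⁻¹ ^ 2 * c₃ ^ 2 * ((L : ℝ) + 1) ^ 2 + D * ε⁻¹)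
          * (32 * ε⁻¹ ^ 2 * c₂ ^ 2 * ((L : ℝ) + 1) ^ 2 + 1)) := by
        rw [sum_const, card_range, nsmul_eq_mul]; push_cast; rfl
    _ ≤ _ := total_cost_le hc₄.le (by positivity) hE hu (by positivity)
        (by linarith [natCast_toNat_le_abs L]) (by positivity)
        (sq_le_sq' (by linarith [neg_abs_le (L : ℝ)]) (by linarith [le_abs_self (L : ℝ)]))

/-- Multilevel cost bound in the case `η = 0, γ = 0, β = 1, α = 1`: the total
training cost is of order `ε⁻⁴ |log ε|⁵`. -/
theorem multilevel_cost_bound_eta0_gamma0_beta1_alpha1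
    (H T c₁ c₂ c₃ c₄ : ℝ) (hH : 1 < H) (hT : 0 < T)
    (hc₁ : 0 < c₁) (hc₂ : 0 < c₂) (hc₃ : 0 < c₃) (hc₄ : 0 < c₄) :
    ∃ c₅ > 0, ∀ ε : ℝ, 0 < ε → ε < Real.exp (-1) →
      ∑ l ∈ Finset.range
          ((⌈Real.log (Real.sqrt 32 * c₁ * T * ε⁻¹) / Real.log H⌉ : ℤ).toNat + 1),
        c₄ * (H ^ (-(l : ℝ)) * T)⁻¹ *
          ((⌈32 * ε ^ (-(2 : ℝ)) * c₃ ^ 2 * (H ^ (-(l : ℝ)) * T) *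
              (((⌈Real.log (Real.sqrt 32 * c₁ * T * ε⁻¹) / Real.log H⌉ : ℤ) : ℝ) + 1) ^ 2⌉₊ : ℝ)) *
          ((⌈32 * ε ^ (-(2 : ℝ)) * c₂ ^ 2 *
              (((⌈Real.log (Real.sqrt 32 * c₁ * T * ε⁻¹) / Real.log H⌉ : ℤ) : ℝ) + 1) ^ 2⌉₊ : ℝ))
        ≤ c₅ * ε ^ (-(4 : ℝ)) * |Real.log ε| ^ 5 :=
  multilevel_cost_bound_eta0_gamma0_beta1_alpha1_general H T c₁ c₂ c₃ c₄ hH hT hc₁ hc₄
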